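/- Let r be an odd prime and n ≥ 5. The alternating group Alt_n contains an element of order 2r if and only if r + 4 ≤ n. -/

import Mathlib

/-!
Write `σ` as a product of disjoint cycles. If `σ` has order `2 * p`, some cycle length is divisible
by `p` and some cycle length is even; if moreover `σ` is even, the number of even-length cycles is
even, hence at least two. A cycle of length divisible by `p` is either odd, so of length at least
`p` and disjoint from two even cycles of length at least `2`, or even, so of length at least `2 * p`
and disjoint from another even cycle. Either way `σ` moves at least `p + 4` points. Conversely, a
`p`-cycle times two disjoint transpositions is even of order `2 * p`.
-/

open Finset

namespace Multiset

theorem two_mul_card_filter_even_le_sum (m : Multiset ℕ) (hm : 0 ∉ m) :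
    2 * card (m.filter Even) ≤ m.sum := by
  calc 2 * card (m.filter Even) ≤ (m.filter Even).sum := by
        rw [mul_comm, ← smul_eq_mul]
        refine card_nsmul_le_sum fun a ha => ?_
        obtain ⟨ham, k, rfl⟩ := mem_filter.mp ha
        have : k + k ≠ 0 := fun h => hm (h ▸ ham)
        omega
    _ ≤ m.sum := by
        rw [← sum_filter_add_sum_filter_not (s := m) Even]
        exact Nat.le_add_right _ _

end Multiset

namespace Equiv.Perm

variable {α : Type*} [Fintype α] [DecidableEq α]

theorem sign_eq_neg_one_pow_card_filter_even (σ : Perm α) :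
    sign σ = (-1) ^ Multiset.card (σ.cycleType.filter Even) := by
  rw [sign_of_cycleType']
  induction σ.cycleType using Multiset.induction_on with
  | empty => rfl
  | cons a s ih =>
    by_cases ha : Even a
    · simp [ha, ih, pow_succ, ha.neg_one_pow]
    · simp [ha, ih, (Nat.not_even_iff_odd.mp ha).neg_one_pow]

theorem exists_mem_cycleType_dvd {σ : Perm α} {p : ℕ} (hp : p.Prime) (h : p ∣ orderOf σ) :
    ∃ c ∈ σ.cycleType, p ∣ c := by
  refine hp.prime.exists_mem_multiset_dvd (h.trans ?_)
  rw [← lcm_cycleType]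
  exact Multiset.lcm_dvd.2 fun _ => Multiset.dvd_prod

theorem add_four_le_card_support {σ : Perm α} (hσ : sign σ = 1) {p : ℕ} (hp : p.Prime)
    (hodd : Odd p) (h : 2 * p ∣ orderOf σ) : p + 4 ≤ #σ.support := by
  obtain ⟨c, hc, hpc⟩ := exists_mem_cycleType_dvd hp (dvd_of_mul_left_dvd h)
  obtain ⟨e, he, h2e⟩ := exists_mem_cycleType_dvd Nat.prime_two (dvd_of_mul_right_dvd h)
  have hc_pos : 0 < c := zero_lt_two.trans_le (two_le_of_mem_cycleType hc)
  have hcard_even : Even (Multiset.card (σ.cycleType.filter Even)) := by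
    rwa [sign_eq_neg_one_pow_card_filter_even, neg_one_pow_eq_one_iff_even (by decide)] at hσ
  have hcard_pos : 0 < Multiset.card (σ.cycleType.filter Even) :=
    Multiset.card_pos_iff_exists_mem.mpr
      ⟨e, Multiset.mem_filter.mpr ⟨he, even_iff_two_dvd.mpr h2e⟩⟩
  obtain ⟨m, hm⟩ := Multiset.exists_cons_of_mem hc
  have hm0 : 0 ∉ m := fun h0 =>
    (two_le_of_mem_cycleType (hm ▸ Multiset.mem_cons_of_mem h0)).not_gt zero_lt_two
  have hsum := m.two_mul_card_filter_even_le_sum hm0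
  rw [hm] at hcard_even hcard_pos
  rw [← sum_cycleType, hm, Multiset.sum_cons]
  by_cases hce : Even c
  · have h2pc : 2 * p ≤ c := Nat.le_of_dvd hc_pos
      ((Nat.coprime_two_left.mpr hodd).mul_dvd_of_dvd_of_dvd (even_iff_two_dvd.mp hce) hpc)
    rw [Multiset.filter_cons_of_pos _ hce, Multiset.card_cons, Nat.even_add_one,
      Nat.not_even_iff] at hcard_even
    have := hp.two_le
    omega
  · have hpc' : p ≤ c := Nat.le_of_dvd hc_pos hpc
    rw [Multiset.filter_cons_of_neg _ hce, Nat.even_iff] at hcard_even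
    rw [Multiset.filter_cons_of_neg _ hce] at hcard_pos
    omega

theorem exists_mem_alternatingGroup_orderOf_eq_two_mul {p : ℕ} (hp : 2 ≤ p) (hodd : Odd p)
    (hcard : p + 4 ≤ Fintype.card α) : ∃ σ ∈ alternatingGroup α, orderOf σ = 2 * p := by
  obtain ⟨σ, hσ⟩ := (exists_with_cycleType_iff α (m := {2, 2, p})).mpr
    ⟨by simp; omega, by simpa using hp⟩
  have hp2 : ¬Even p := Nat.not_even_iff_odd.mpr hodd
  refine ⟨σ, ?_, ?_⟩
  · rw [mem_alternatingGroup, sign_eq_neg_one_pow_card_filter_even, hσ]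
    simp [Multiset.filter_singleton, hp2]
  · rw [← lcm_cycleType, hσ]
    simp [lcm_eq_nat_lcm, (Nat.coprime_two_left.mpr hodd).lcm_eq_mul]

end Equiv.Perm

theorem stmt_13_general (n r : ℕ) (hr : r.Prime) (hrodd : Odd r) :
    (∃ g : alternatingGroup (Fin n), orderOf g = 2 * r) ↔ r + 4 ≤ n := by
  constructor
  · rintro ⟨g, hg⟩
    calc r + 4 ≤ #(g : Equiv.Perm (Fin n)).support :=
          Equiv.Perm.add_four_le_card_support (Equiv.Perm.mem_alternatingGroup.mp g.2) hr hrodd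
            (by rw [Subgroup.orderOf_coe, hg])
      _ ≤ n := by simpa using card_le_univ (g : Equiv.Perm (Fin n)).support
  · intro h
    obtain ⟨σ, hσ, hord⟩ :=
      Equiv.Perm.exists_mem_alternatingGroup_orderOf_eq_two_mul (α := Fin n) hr.two_le hrodd
        (by simpa using h)
    exact ⟨⟨σ, hσ⟩, by rwa [Subgroup.orderOf_mk]⟩

theorem stmt_13 (n r : ℕ) (hn : 5 ≤ n) (hr : r.Prime) (hrodd : Odd r)
    (hrn : r ≤ n) :
    (∃ g : alternatingGroup (Fin n), orderOf g = 2 * r) ↔ r + 4 ≤ n :=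
  stmt_13_general n r hr hrodd
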